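/- arXiv:2403.17946 — 3 statements merged into one kernel-verified Lean document; each statement's English description precedes it below -/
import Mathlib

section
/- Let A, B : X → X be bounded linear operators on a Banach space X, x ∈ X, and f ∈ X* with f(x) = 1. Then ∇(f,A,x)·Δ(B,x,f) ≥ |f(A(B(x))) − f(A(x))·f(B(x))|, where Δ(B,x,f) := ‖Bx − f(Bx)x‖ and ∇(f,A,x) := ‖f∘A − f(Ax)·f‖ is the operator norm of the functional u ↦ f(Au) − f(Ax)f(u). -/
lemma ContinuousLinearMap.comp_sub_smul_apply_sub_smul {𝕜 E : Type*} [NormedField 𝕜]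
    [SeminormedAddCommGroup E] [NormedSpace 𝕜 E] (f : E →L[𝕜] 𝕜) (A : E →L[𝕜] E) {x : E}
    (hfx : f x = 1) (y : E) :
    (f.comp A - f (A x) • f) (y - f y • x) = f (A y) - f (A x) * f y := by
  simp only [sub_apply, comp_apply, smul_apply, map_sub, map_smul, hfx, smul_eq_mul]
  ring

theorem stmt5_general {X : Type*} [NormedAddCommGroup X] [NormedSpace ℂ X]
    (A B : X →L[ℂ] X) (x : X) (f : X →L[ℂ] ℂ) (hfx : f x = 1) :
    ‖f.comp A - f (A x) • f‖ * ‖B x - f (B x) • x‖ ≥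
      ‖f (A (B x)) - f (A x) * f (B x)‖ := by
  rw [ge_iff_le, ← f.comp_sub_smul_apply_sub_smul A hfx (B x)]
  exact (f.comp A - f (A x) • f).le_opNorm _

theorem stmt5 {X : Type*} [NormedAddCommGroup X] [NormedSpace ℂ X] [CompleteSpace X]
    (A B : X →L[ℂ] X) (x : X) (f : X →L[ℂ] ℂ) (hfx : f x = 1) :
    ‖f.comp A - f (A x) • f‖ * ‖B x - f (B x) • x‖ ≥
      ‖f (A (B x)) - f (A x) * f (B x)‖ :=
  stmt5_general A B x f hfx
end

section
/- Let A, B : X → X be bounded linear operators on a Banach space X, x ∈ X, f ∈ X* with f(x) = 1. Then ∇(f,A,x)·Δ(B,x,f) + ‖f∘B‖·Δ(A,x,f) ≥ |f([A,B]x)| where [A,B] = AB − BA, Δ(A,x,f) := ‖Ax − f(Ax)x‖, Δ(B,x,f) := ‖Bx − f(Bx)x‖, and ∇(f,A,x) := ‖f∘A − f(Ax)f‖ (operator norm). -/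
namespace ContinuousLinearMap

variable {𝕜 X : Type*} [NontriviallyNormedField 𝕜] [SeminormedAddCommGroup X] [NormedSpace 𝕜 X]

/-- Writing `Bx` and `Ax` relative to the splitting `X = 𝕜 x ⊕ ker f`, the components along `x`
cancel in `f (ABx - BAx)`. -/
theorem apply_commutator_eq_of_apply_eq_one (A B : X →L[𝕜] X) {x : X} {f : X →L[𝕜] 𝕜}
    (hfx : f x = 1) :
    f (A (B x) - B (A x)) =
      (f.comp A - f (A x) • f) (B x - f (B x) • x) - f.comp B (A x - f (A x) • x) := by
  simp only [sub_apply, smul_apply, comp_apply, map_sub, map_smul, hfx, smul_eq_mul, mul_one]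
  ring

theorem norm_apply_commutator_le_of_apply_eq_one (A B : X →L[𝕜] X) {x : X} {f : X →L[𝕜] 𝕜}
    (hfx : f x = 1) :
    ‖f (A (B x) - B (A x))‖ ≤
      ‖f.comp A - f (A x) • f‖ * ‖B x - f (B x) • x‖ + ‖f.comp B‖ * ‖A x - f (A x) • x‖ := by
  rw [apply_commutator_eq_of_apply_eq_one A B hfx]
  exact (norm_sub_le _ _).trans (add_le_add (le_opNorm _ _) (le_opNorm _ _))

end ContinuousLinearMap

theorem stmt6_general {X : Type*} [NormedAddCommGroup X] [NormedSpace ℂ X]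
    (A B : X →L[ℂ] X) (x : X) (f : X →L[ℂ] ℂ) (hfx : f x = 1) :
    ‖f.comp A - f (A x) • f‖ * ‖B x - f (B x) • x‖ +
      ‖f.comp B‖ * ‖A x - f (A x) • x‖ ≥
      ‖f (A (B x) - B (A x))‖ :=
  ContinuousLinearMap.norm_apply_commutator_le_of_apply_eq_one A B hfx

theorem stmt6 {X : Type*} [NormedAddCommGroup X] [NormedSpace ℂ X] [CompleteSpace X]
    (A B : X →L[ℂ] X) (x : X) (f : X →L[ℂ] ℂ) (hfx : f x = 1) :
    ‖f.comp A - f (A x) • f‖ * ‖B x - f (B x) • x‖ +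
      ‖f.comp B‖ * ‖A x - f (A x) • x‖ ≥
      ‖f (A (B x) - B (A x))‖ :=
  stmt6_general A B x f hfx
end

section
/- Let A, B : X → X be bounded linear operators on a Banach space X, x ∈ X, f ∈ X* with f(x) = 1. Then ∇(f,A,x)·Δ(B,x,f) + ‖f∘B‖·‖Ax + f(Ax)x‖ ≥ |f((AB + BA)x)|, where Δ(B,x,f) := ‖Bx − f(Bx)x‖ and ∇(f,A,x) := ‖f∘A − f(Ax)f‖. -/
theorem apply_anticommutator_eq_of_apply_eq_one {𝕜 X : Type*} [NormedField 𝕜]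
    [SeminormedAddCommGroup X] [NormedSpace 𝕜 X] {A B : X →L[𝕜] X} {x : X} {f : X →L[𝕜] 𝕜}
    (hfx : f x = 1) :
    f (A (B x) + B (A x)) =
      (f.comp A - f (A x) • f) (B x - f (B x) • x) + f.comp B (A x + f (A x) • x) := by
  simp only [map_add, map_sub, map_smul, sub_apply, smul_apply, ContinuousLinearMap.comp_apply,
    smul_eq_mul, hfx]
  ring

theorem stmt7_general {X : Type*} [NormedAddCommGroup X] [NormedSpace ℂ X]
    (A B : X →L[ℂ] X) (x : X) (f : X →L[ℂ] ℂ) (hfx : f x = 1) :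
    ‖f.comp A - f (A x) • f‖ * ‖B x - f (B x) • x‖ +
      ‖f.comp B‖ * ‖A x + f (A x) • x‖ ≥
      ‖f (A (B x) + B (A x))‖ :=
  calc ‖f (A (B x) + B (A x))‖
      = ‖(f.comp A - f (A x) • f) (B x - f (B x) • x) + f.comp B (A x + f (A x) • x)‖ := by
        rw [apply_anticommutator_eq_of_apply_eq_one hfx]
    _ ≤ ‖(f.comp A - f (A x) • f) (B x - f (B x) • x)‖ + ‖f.comp B (A x + f (A x) • x)‖ :=
        norm_add_le _ _
    _ ≤ _ := add_le_add (ContinuousLinearMap.le_opNorm _ _) (ContinuousLinearMap.le_opNorm _ _)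

theorem stmt7 {X : Type*} [NormedAddCommGroup X] [NormedSpace ℂ X] [CompleteSpace X]
    (A B : X →L[ℂ] X) (x : X) (f : X →L[ℂ] ℂ) (hfx : f x = 1) :
    ‖f.comp A - f (A x) • f‖ * ‖B x - f (B x) • x‖ +
      ‖f.comp B‖ * ‖A x + f (A x) • x‖ ≥
      ‖f (A (B x) + B (A x))‖ :=
  stmt7_general A B x f hfx
end
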